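/- As r → ∞, the real part of the winding number of the upper semicircular arc part_circlepath z r 0 π about any fixed point z₀ tends to 1/2. -/

import Mathlib

open Complex Filter Topology Polynomial Set

/-- The winding number of a path `γ : [0,1] → ℂ` about `z`,
`(1/(2πi)) ∮_γ dw/(w - z)`. -/
noncomputable def windingNumber (γ : ℝ → ℂ) (z : ℂ) : ℂ :=
  (1 / (2 * Real.pi * Complex.I)) * ∫ t in (0:ℝ)..1, deriv γ t / (γ t - z)

/-- The straight-line path from `a` to `b`. -/
noncomputable def linepath (a b : ℂ) : ℝ → ℂ := fun t => (1 - (t : ℂ)) * a + (t : ℂ) * b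

/-- The circular-arc path `t ↦ z + r·exp(i·((1-t)·st + t·tt))`. -/
noncomputable def partCirclepath (z : ℂ) (r st tt : ℝ) : ℝ → ℂ :=
  fun t => z + (r : ℂ) * Complex.exp (Complex.I * (((1 - t) * st + t * tt : ℝ) : ℂ))

/-!
Along the arc `γ(t) = z + r e(t)`, `e(t) = exp (i ((1 - t) st + t tt))`, the integrand of the
winding number is `γ'(t) / (γ(t) - z₀) = i (tt - st) · r e(t) / (z - z₀ + r e(t))`, with `|e(t)| = 1`.
The quotient `r w / (c + r w)` tends to `1` for every `w ≠ 0` and is bounded by `2` as soon as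
`r > 2 |c|`, so by dominated convergence the winding number tends to `(tt - st) / 2π`, which is
`1/2` for the upper semicircle.
-/

section RadialQuotient

variable {c w : ℂ} {r : ℝ}

lemma norm_mul_div_add_mul_le_two (hw : ‖w‖ = 1) (hr : 2 * ‖c‖ < r) :
    ‖r * w / (c + r * w)‖ ≤ 2 := by
  have hr0 : 0 < r := by linarith [norm_nonneg c]
  have hnum : ‖(r : ℂ) * w‖ = r := by simp [hw, hr0.le]
  have hden : r / 2 ≤ ‖c + r * w‖ := by
    have := norm_sub_le_norm_add ((r : ℂ) * w) c
    rw [hnum, add_comm] at this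
    linarith
  rw [norm_div, hnum, div_le_iff₀ (by linarith)]
  linarith

lemma tendsto_mul_div_add_mul_atTop (hw : w ≠ 0) :
    Tendsto (fun r : ℝ => r * w / (c + r * w)) atTop (𝓝 1) := by
  have hsmall : Tendsto (fun r : ℝ => c / (r * w)) atTop (𝓝 0) := by
    have hinv : Tendsto (fun r : ℝ => ((r : ℂ))⁻¹) atTop (𝓝 0) := by
      simpa [Function.comp_def] using (continuous_ofReal.tendsto 0).comp tendsto_inv_atTop_zero
    refine (mul_zero (c / w) ▸ hinv.const_mul (c / w)).congr fun r => ?_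
    ring
  have hlim : Tendsto (fun r : ℝ => (c / (r * w) + 1)⁻¹) atTop (𝓝 1) := by
    simpa using (hsmall.add_const 1).inv₀ (by norm_num)
  refine hlim.congr' ?_
  filter_upwards [eventually_gt_atTop 0] with r hr
  have hrw : (r : ℂ) * w ≠ 0 := mul_ne_zero (ofReal_ne_zero.mpr hr.ne') hw
  rw [div_add_one hrw, inv_div]

end RadialQuotient

lemma tendsto_integral_mul_div_add_mul_atTop {u : ℝ → ℂ} (hu : Measurable u)
    (hu1 : ∀ t, ‖u t‖ = 1) (c : ℂ) (a b : ℝ) :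
    Tendsto (fun r : ℝ => ∫ t in a..b, r * u t / (c + r * u t)) atTop (𝓝 (b - a)) := by
  have hlim := intervalIntegral.tendsto_integral_filter_of_dominated_convergence
    (F := fun (r : ℝ) t => r * u t / (c + r * u t)) (f := fun _ => (1 : ℂ)) (a := a) (b := b)
    (l := atTop) (bound := fun _ => 2) ?_ ?_ (intervalIntegrable_const (μ := MeasureTheory.volume)) ?_
  · simpa using hlim
  · exact Eventually.of_forall fun r => (by fun_prop : Measurable _).aestronglyMeasurable
  · filter_upwards [eventually_gt_atTop (2 * ‖c‖)] with r hr
    exact Eventually.of_forall fun t _ => norm_mul_div_add_mul_le_two (hu1 t) hr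
  · exact Eventually.of_forall fun t _ =>
      tendsto_mul_div_add_mul_atTop (norm_ne_zero_iff.mp (by simp [hu1 t]))

lemma hasDerivAt_partCirclepath (z : ℂ) (r st tt t : ℝ) :
    HasDerivAt (partCirclepath z r st tt)
      (r * exp (I * (((1 - t) * st + t * tt : ℝ) : ℂ)) * (I * (tt - st))) t := by
  have hangle : HasDerivAt (fun t : ℝ => (1 - t) * st + t * tt) (tt - st) t := by
    refine ((((hasDerivAt_id t).const_sub 1).mul_const st).add
      ((hasDerivAt_id t).mul_const tt)).congr_deriv ?_
    ring
  exact (((hangle.ofReal_comp.const_mul I).cexp.const_mul (r : ℂ)).const_add z).congr_deriv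
    (by push_cast; ring)

lemma windingNumber_partCirclepath (z z₀ : ℂ) (r st tt : ℝ) :
    windingNumber (partCirclepath z r st tt) z₀ =
      (tt - st) / (2 * Real.pi) * ∫ t in (0:ℝ)..1,
        r * exp (I * (((1 - t) * st + t * tt : ℝ) : ℂ)) /
          (z - z₀ + r * exp (I * (((1 - t) * st + t * tt : ℝ) : ℂ))) := by
  have hintegrand : ∀ t, deriv (partCirclepath z r st tt) t / (partCirclepath z r st tt t - z₀) =
      I * (tt - st) * (r * exp (I * (((1 - t) * st + t * tt : ℝ) : ℂ)) /
          (z - z₀ + r * exp (I * (((1 - t) * st + t * tt : ℝ) : ℂ)))) := by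
    intro t
    rw [(hasDerivAt_partCirclepath z r st tt t).deriv, partCirclepath]
    ring
  simp only [windingNumber, hintegrand, intervalIntegral.integral_const_mul, ← mul_assoc]
  congr 1
  field_simp

theorem tendsto_windingNumber_partCirclepath (z z₀ : ℂ) (st tt : ℝ) :
    Tendsto (fun r : ℝ => windingNumber (partCirclepath z r st tt) z₀) atTop
      (𝓝 (((tt - st) / (2 * Real.pi) : ℝ) : ℂ)) := by
  have hint := tendsto_integral_mul_div_add_mul_atTop
    (u := fun t : ℝ => exp (I * (((1 - t) * st + t * tt : ℝ) : ℂ))) (by fun_prop)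
    (fun t => by rw [norm_exp_I_mul_ofReal]) (z - z₀) 0 1
  simp only [windingNumber_partCirclepath]
  push_cast
  simpa using hint.const_mul ((tt - st) / (2 * Real.pi) : ℂ)

theorem Re_winding_number_tendsto_part_circlepath (z z₀ : ℂ) :
    Tendsto (fun r : ℝ => (windingNumber (partCirclepath z r 0 Real.pi) z₀).re)
      atTop (𝓝 (1/2)) := by
  have h := (continuous_re.tendsto _).comp (tendsto_windingNumber_partCirclepath z z₀ 0 Real.pi)
  have half : (Real.pi - 0) / (2 * Real.pi) = 1 / 2 := by rw [sub_zero]; field_simp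
  rwa [ofReal_re, half] at h
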